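/- arXiv:1304.0056 — 3 statements merged into one kernel-verified Lean document; each statement's English description precedes it below -/
import Mathlib

section
/- Let E be an injective module and s ∈ End(E) an endomorphism with essential kernel. Then 1 - s is an automorphism of E. -/
/-!
Every `x ∈ ker s` is fixed by `1 - s`, so `ker (1 - s)` meets the essential submodule `ker s`
trivially and `1 - s` is injective. Injectivity of `E` then gives a left inverse `g` of `1 - s`,
which is the identity on `ker s`; hence `ker g` meets `ker s` trivially as well, `g` is injective,
and a left inverse that is injective is a two-sided inverse.
-/

def IsEssential {R M : Type*} [Ring R] [AddCommGroup M] [Module R M]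
    (N : Submodule R M) : Prop :=
  ∀ K : Submodule R M, K ≠ ⊥ → N ⊓ K ≠ ⊥

section

variable {R E : Type*} [Ring R] [AddCommGroup E] [Module R E]

theorem IsEssential.eq_bot_of_inf_eq_bot {N K : Submodule R E} (hN : IsEssential N)
    (h : N ⊓ K = ⊥) : K = ⊥ :=
  by_contra fun hK => hN K hK h

namespace Module.End

open LinearMap

theorem one_sub_apply_of_mem_ker {s : Module.End R E} {x : E} (hx : x ∈ ker s) :
    (1 - s) x = x := by
  rw [mem_ker] at hx
  simp [hx]

theorem ker_inf_ker_one_sub_eq_bot (s : Module.End R E) : ker s ⊓ ker (1 - s) = ⊥ := by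
  refine eq_bot_iff.mpr fun x ⟨hs, hf⟩ => ?_
  rw [Submodule.mem_bot, ← one_sub_apply_of_mem_ker hs]
  exact hf

theorem ker_inf_ker_eq_bot_of_mul_one_sub_eq_one {s g : Module.End R E} (h : g * (1 - s) = 1) :
    ker s ⊓ ker g = ⊥ := by
  refine eq_bot_iff.mpr fun x ⟨hs, hg⟩ => ?_
  have hgx : g x = x := by
    conv_lhs => rw [← one_sub_apply_of_mem_ker hs]
    exact LinearMap.congr_fun h x
  rw [Submodule.mem_bot, ← hgx]
  exact hg

theorem isUnit_of_mul_eq_one_of_injective {f g : Module.End R E} (h : g * f = 1)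
    (hg : Function.Injective g) : IsUnit f :=
  have hgf : Function.LeftInverse g f := LinearMap.congr_fun h
  isUnit_iff_exists.mpr
    ⟨g, LinearMap.ext (hgf.rightInverse_of_injective hg), h⟩

end Module.End

end

/-- If E is injective and s is an endomorphism of E with essential kernel,
then 1 - s is an automorphism of E. -/
theorem stmt1 {R E : Type*} [Ring R] [AddCommGroup E] [Module R E]
    (hE : Module.Injective R E) (s : Module.End R E)
    (hs : IsEssential (LinearMap.ker s)) :
    IsUnit (1 - s) := by
  have hf : Function.Injective ⇑(1 - s) :=
    LinearMap.ker_eq_bot.mp (hs.eq_bot_of_inf_eq_bot (Module.End.ker_inf_ker_one_sub_eq_bot s))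
  obtain ⟨g, hg⟩ := hE.out (1 - s) hf LinearMap.id
  have hgf : g * (1 - s) = 1 := LinearMap.ext hg
  refine Module.End.isUnit_of_mul_eq_one_of_injective hgf (LinearMap.ker_eq_bot.mp ?_)
  exact hs.eq_bot_of_inf_eq_bot (Module.End.ker_inf_ker_eq_bot_of_mul_one_sub_eq_one hgf)
end

section
/- Let M be an automorphism-invariant module such that End(M)/J(End(M)) has all idempotents central and idempotents lift modulo J(End(M)). Then M is a clean module, i.e., every endomorphism of M is the sum of an idempotent endomorphism and an automorphism. -/
namespace Ring

variable {A : Type*} [Ring A]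

theorem isUnit_of_sub_one_mem_jacobson {r : A} (hr : r - 1 ∈ jacobson A) : IsUnit r := by
  rw [← Ideal.jacobson_bot] at hr
  obtain ⟨s, hs⟩ := Ideal.exists_mul_sub_mem_of_sub_one_mem_jacobson r hr
  rw [Ideal.mem_bot, sub_eq_zero] at hs
  have hs' : s - 1 ∈ Ideal.jacobson ⊥ := by
    simpa [mul_sub, hs] using neg_mem (Ideal.mul_mem_left _ s hr)
  obtain ⟨t, ht⟩ := Ideal.exists_mul_sub_mem_of_sub_one_mem_jacobson s hs'
  rw [Ideal.mem_bot, sub_eq_zero] at ht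
  -- `s` has the left inverse `t` and the right inverse `r`, so `t = r` and `r s = 1`
  exact isUnit_iff_exists_and_exists.2 ⟨⟨s, left_inv_eq_right_inv ht hs ▸ ht⟩, ⟨s, hs⟩⟩

theorem le_jacobson_of_forall_isUnit_one_add {I : Ideal A} (hI : ∀ t ∈ I, IsUnit (1 + t)) :
    I ≤ jacobson A := by
  intro x hx
  rw [← Ideal.jacobson_bot, Ideal.mem_jacobson_iff]
  intro y
  obtain ⟨u, hu⟩ := hI _ (I.mul_mem_left y hx)
  refine ⟨↑u⁻¹, ?_⟩
  rw [Ideal.mem_bot, sub_eq_zero, mul_assoc, ← mul_add_one, add_comm, ← hu, Units.inv_mul]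

end Ring

theorem Ideal.Quotient.isLocalHom_mk_of_le_jacobson {A : Type*} [Ring A] {I : Ideal A}
    [I.IsTwoSided] (hI : I ≤ Ring.jacobson A) : IsLocalHom (Ideal.Quotient.mk I) := by
  refine ⟨fun a ha => ?_⟩
  obtain ⟨b, hab, hba⟩ := isUnit_iff_exists.1 ha
  obtain ⟨b, rfl⟩ := Ideal.Quotient.mk_surjective b
  have unit_of (c : A) (hc : Ideal.Quotient.mk I c = 1) : IsUnit c :=
    Ring.isUnit_of_sub_one_mem_jacobson (hI (Ideal.Quotient.eq.1 (by rw [hc, map_one])))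
  obtain ⟨u, hu⟩ := unit_of (a * b) (by rwa [map_mul])
  obtain ⟨v, hv⟩ := unit_of (b * a) (by rwa [map_mul])
  refine isUnit_iff_exists_and_exists.2 ⟨⟨b * ↑u⁻¹, ?_⟩, ⟨↑v⁻¹ * b, ?_⟩⟩
  · rw [← mul_assoc, ← hu, Units.mul_inv]
  · rw [mul_assoc, ← hv, Units.inv_mul]

theorem IsIdempotentElem.eq_zero_of_mem_jacobson {A : Type*} [Ring A] {e : A}
    (he : IsIdempotentElem e) (hJ : e ∈ Ring.jacobson A) : e = 0 := by
  obtain ⟨u, hu⟩ := Ring.isUnit_of_sub_one_mem_jacobson (r := 1 - e) (by simpa using hJ)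
  calc e = e * (1 - e) * ↑u⁻¹ := by rw [← hu, mul_assoc, Units.mul_inv, mul_one]
    _ = 0 := by rw [mul_sub, mul_one, he.eq, sub_self, zero_mul]

def IsAbelianRing (B : Type*) [Ring B] : Prop :=
  ∀ e : B, IsIdempotentElem e → ∀ z, Commute e z

namespace IsAbelianRing

variable {B : Type*} [Ring B]

theorem commute_of_mul_mul_eq (hB : IsAbelianRing B) {x y : B} (hxyx : x * y * x = x)
    (hyxy : y * x * y = y) : Commute x y := by
  have he : IsIdempotentElem (x * y) := by rw [IsIdempotentElem, ← mul_assoc, hxyx]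
  have hf : IsIdempotentElem (y * x) := by rw [IsIdempotentElem, ← mul_assoc, hyxy]
  have hxy : x * y = (y * x) * (x * y) := calc
    x * y = x * (y * x) * y := by rw [← mul_assoc x y x, hxyx]
    _ = (y * x) * (x * y) := by rw [← (hB _ hf x).eq, mul_assoc]
  have hyx : y * x = (x * y) * (y * x) := calc
    y * x = y * (x * y) * x := by rw [← mul_assoc y x y, hyxy]
    _ = (x * y) * (y * x) := by rw [← (hB _ he y).eq, mul_assoc]
  rw [Commute, SemiconjBy, hxy, ← (hB _ he _).eq, ← hyx]

theorem exists_unit_mul_mul_eq (hB : IsAbelianRing B) {x y : B} (h : x * y * x = x) :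
    ∃ u : Bˣ, x * u * x = x := by
  -- `y' = y x y` is a reflexive inverse of `x`, so commutes with `x`; `y' + (1 - x y')` is a unit
  have hx : ∀ z, x * (y * (x * z)) = x * z := fun z => by simp only [← mul_assoc, h]
  set y' := y * x * y
  have hxy'x : x * y' * x = x := by simp only [y', mul_assoc, hx]; simp only [← mul_assoc, h]
  have hy'xy' : y' * x * y' = y' := by simp only [y', mul_assoc, hx]
  have hy'x : y' * x = x * y' := (hB.commute_of_mul_mul_eq hxy'x hy'xy').eq.symm
  have h1 : x * (1 - x * y') = 0 := by
    rw [mul_sub, mul_one, ← hy'x, ← mul_assoc, hxy'x, sub_self]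
  have h2 : (1 - x * y') * x = 0 := by rw [sub_mul, one_mul, hxy'x, sub_self]
  have h3 : y' * (1 - x * y') = 0 := by rw [mul_sub, mul_one, ← mul_assoc, hy'xy', sub_self]
  have h4 : (1 - x * y') * y' = 0 := by rw [sub_mul, one_mul, ← hy'x, hy'xy', sub_self]
  have h5 : (1 - x * y') * (1 - x * y') = 1 - x * y' := by
    rw [sub_mul, one_mul, mul_assoc, h3, mul_zero, sub_zero]
  refine ⟨⟨y' + (1 - x * y'), x + (1 - x * y'), ?_, ?_⟩, ?_⟩
  · rw [add_mul, mul_add, mul_add, hy'x, h2, h3, h5]; abel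
  · rw [add_mul, mul_add, mul_add, h1, h4, h5]; abel
  · rw [Units.val_mk, mul_add, add_mul, hxy'x, h1, zero_mul, add_zero]

end IsAbelianRing

theorem isAbelianRing_quotient_of_mul_sub_mul_mem {A : Type*} [Ring A] {I : Ideal A}
    [I.IsTwoSided] (h : ∀ e x : A, e * e - e ∈ I → e * x - x * e ∈ I) :
    IsAbelianRing (A ⧸ I) := by
  intro e he z
  obtain ⟨e, rfl⟩ := Ideal.Quotient.mk_surjective e
  obtain ⟨z, rfl⟩ := Ideal.Quotient.mk_surjective z
  rw [IsIdempotentElem, ← map_mul, Ideal.Quotient.eq] at he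
  rw [Commute, SemiconjBy, ← map_mul, ← map_mul, Ideal.Quotient.eq]
  exact h e z he

theorem isUnit_sub_one_add_mul_of_mul_mul_eq {B : Type*} [Ring B] {x : B} {u : Bˣ}
    (h : x * u * x = x) (hc : Commute (x * u) u) : IsUnit (x - 1 + x * u) := by
  set g := x * (u : B) with hg_def
  have hg : g * g = g := by rw [hg_def, ← mul_assoc, h]
  have hx : x = g * ↑u⁻¹ := by rw [hg_def, mul_assoc, Units.mul_inv, mul_one]
  have hgu : g * u = u * g := hc.eq
  have hgu' : g * ↑u⁻¹ = ↑u⁻¹ * g := hc.units_inv_right.eq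
  have hg0 : g * (1 - g) = 0 := by rw [mul_sub, mul_one, hg, sub_self]
  have h0g : (1 - g) * g = 0 := by rw [sub_mul, one_mul, hg, sub_self]
  have hgg : (1 - g) * (1 - g) = 1 - g := by rw [sub_mul, one_mul, hg0, sub_zero]
  rw [show x - 1 + g = g * ↑u⁻¹ - (1 - g) by rw [hx]; abel]
  refine isUnit_iff_exists.2 ⟨u * g - (1 - g), ?_, ?_⟩
  · calc (g * ↑u⁻¹ - (1 - g)) * (↑u * g - (1 - g))
        = g * (↑u⁻¹ * (↑u * g)) - g * ↑u⁻¹ * (1 - g) - (1 - g) * (↑u * g)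
          + (1 - g) * (1 - g) := by noncomm_ring
      _ = 1 := by
        rw [Units.inv_mul_cancel_left, hg, hgu', mul_assoc, hg0, ← hgu, ← mul_assoc, h0g, hgg]
        noncomm_ring
  · calc (↑u * g - (1 - g)) * (g * ↑u⁻¹ - (1 - g))
        = ↑u * (g * g) * ↑u⁻¹ - ↑u * (g * (1 - g)) - (1 - g) * g * ↑u⁻¹
          + (1 - g) * (1 - g) := by noncomm_ring
      _ = 1 := by
        rw [hg, ← hgu, Units.mul_inv_cancel_right, hg0, h0g, hgg]
        noncomm_ring

theorem exists_idempotent_add_unit_of_mul_mul_sub_mem_jacobson {A : Type*} [Ring A]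
    (hA : IsAbelianRing (A ⧸ Ring.jacobson A))
    (hlift : ∀ e' : A, e' * e' - e' ∈ Ring.jacobson A →
      ∃ e : A, e * e = e ∧ e - e' ∈ Ring.jacobson A)
    {x : A} {u : Aˣ} (hx : x * u * x - x ∈ Ring.jacobson A) :
    ∃ (e : A) (v : Aˣ), e * e = e ∧ x = e + v := by
  let q := Ideal.Quotient.mk (Ring.jacobson A)
  have : IsLocalHom q := Ideal.Quotient.isLocalHom_mk_of_le_jacobson le_rfl
  have hxu : x * u * (x * u) - x * u ∈ Ring.jacobson A := by
    rw [← mul_assoc, ← sub_mul]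
    exact Ideal.mul_mem_right _ _ hx
  obtain ⟨e, he, hex⟩ := hlift _ hxu
  let w := Units.map (q : A →* A ⧸ Ring.jacobson A) u
  have hqx : q x * w * q x = q x := by simpa [w, ← map_mul] using Ideal.Quotient.eq.2 hx
  have hc : Commute (q x * w) w := hA _ (by rw [IsIdempotentElem, ← mul_assoc, hqx]) _
  have hunit : IsUnit (q (x - 1 + e)) := by
    rw [map_add, map_sub, map_one, Ideal.Quotient.eq.2 hex, map_mul]
    exact isUnit_sub_one_add_mul_of_mul_mul_eq hqx hc
  obtain ⟨v, hv⟩ := (isUnit_map_iff q _).1 hunit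
  refine ⟨1 - e, v, ?_, ?_⟩
  · rw [sub_mul, one_mul, mul_sub, mul_one, he, sub_self, sub_zero]
  · rw [hv]; abel

theorem exists_le_maximal_disjoint {α : Type*} [CompleteLattice α] [IsCompactlyGenerated α]
    {a c : α} (h : Disjoint a c) : ∃ b, c ≤ b ∧ Maximal (Disjoint a) b := by
  refine zorn_le_nonempty₀ _ (fun s hs hchain _ _ => ⟨sSup s, ?_, fun _ => le_sSup⟩) c h
  exact (hchain.directedOn.disjoint_sSup_right).2 hs

namespace IsEssential

variable {R V W : Type*} [Ring R] [AddCommGroup V] [Module R V] [AddCommGroup W] [Module R W]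
  {N N' : Submodule R V}

theorem eq_bot_of_disjoint (hN : IsEssential N) {K : Submodule R V} (h : Disjoint N K) : K = ⊥ :=
  of_not_not fun hK => hN K hK h.eq_bot

theorem mono (hN : IsEssential N) (h : N ≤ N') : IsEssential N' :=
  fun K hK hN'K => hN K hK (eq_bot_iff.2 (hN'K ▸ inf_le_inf_right K h))

theorem inf (hN : IsEssential N) (hN' : IsEssential N') : IsEssential (N ⊓ N') :=
  fun K hK h => hN _ (hN' K hK) (by rwa [← inf_assoc])

theorem comap (hN : IsEssential N) (f : W →ₗ[R] V) : IsEssential (N.comap f) := by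
  intro K hK hNK
  have hker : Disjoint K (LinearMap.ker f) :=
    disjoint_iff.2 <| eq_bot_iff.2 <|
      hNK ▸ inf_comm K _ ▸ inf_le_inf_left K (LinearMap.ker_le_comap f)
  refine hN (K.map f) (fun h => hK ?_) ?_
  · exact disjoint_self.1 (hker.mono_right (LinearMap.le_ker_iff_map.2 h))
  · rw [inf_comm, Submodule.map_inf_eq_map_inf_comap, inf_comm, hNK, Submodule.map_bot]

theorem map_subtype {K : Submodule R N} (hK : IsEssential K) (hN : IsEssential N) :
    IsEssential (K.map N.subtype) := by
  intro L hL hKL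
  rw [Submodule.map_inf_eq_map_inf_comap, ← LinearMap.le_ker_iff_map, N.ker_subtype,
    le_bot_iff] at hKL
  refine hN L hL ?_
  rw [← Submodule.map_comap_subtype, of_not_not fun h => hK _ h hKL, Submodule.map_bot]

end IsEssential

theorem isEssential_sup_of_maximal_disjoint {R V : Type*} [Ring R] [AddCommGroup V] [Module R V]
    {A B : Submodule R V} (hB : Maximal (Disjoint A) B) : IsEssential (A ⊔ B) := by
  intro K hK hABK
  have hKB : K ≤ B := by
    have := hB.eq_of_ge (hB.prop.disjoint_sup_right_of_disjoint_sup_left (disjoint_iff.2 hABK))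
      le_sup_left
    exact le_sup_right.trans this.le
  exact hK (eq_bot_iff.2 (hABK ▸ le_inf (hKB.trans le_sup_right) le_rfl))

section EssKerIdeal

variable (R V : Type*) [Ring R] [AddCommGroup V] [Module R V]

def essKerIdeal : Ideal (Module.End R V) where
  carrier := {g | IsEssential (LinearMap.ker g)}
  add_mem' ha hb := (IsEssential.inf ha hb).mono fun x hx => by
    simp [LinearMap.mem_ker.1 hx.1, LinearMap.mem_ker.1 hx.2]
  zero_mem' K hK := by rwa [LinearMap.ker_zero, top_inf_eq]
  smul_mem' c _ hg := IsEssential.mono hg fun x hx => by simp [LinearMap.mem_ker.1 hx]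

variable {R V}

theorem mem_essKerIdeal {g : Module.End R V} :
    g ∈ essKerIdeal R V ↔ IsEssential (LinearMap.ker g) := Iff.rfl

instance : (essKerIdeal R V).IsTwoSided :=
  ⟨fun b hg => by
    rw [mem_essKerIdeal, Module.End.mul_eq_comp, LinearMap.ker_comp]
    exact IsEssential.comap hg b⟩

end EssKerIdeal

namespace Module.Injective

variable {R E : Type*} [Ring R] [AddCommGroup E] [Module R E]

theorem exists_leftInverseOn (hE : Module.Injective R E) (g : Module.End R E)
    {N : Submodule R E} (h : Disjoint N (LinearMap.ker g)) :
    ∃ ρ : Module.End R E, ∀ x ∈ N, ρ (g x) = x := by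
  have hinj : Function.Injective (g ∘ₗ N.subtype) := by
    rwa [← LinearMap.ker_eq_bot, LinearMap.ker_comp, ← Submodule.disjoint_iff_comap_eq_bot]
  obtain ⟨ρ, hρ⟩ := hE.out _ hinj N.subtype
  exact ⟨ρ, fun x hx => hρ ⟨x, hx⟩⟩

theorem exists_eq_self_on_eq_zero_on (hE : Module.Injective R E) {P Q : Submodule R E}
    (h : Disjoint P Q) : ∃ φ : Module.End R E, (∀ x ∈ P, φ x = x) ∧ ∀ x ∈ Q, φ x = 0 := by
  have hinj : Function.Injective (P.subtype.coprod Q.subtype) := by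
    rw [← LinearMap.ker_eq_bot, LinearMap.ker_coprod_of_disjoint_range _ _ (by simpa using h)]
    simp
  obtain ⟨φ, hφ⟩ := hE.out _ hinj (P.subtype ∘ₗ LinearMap.fst R P Q)
  exact ⟨φ, fun x hx => by simpa using hφ (⟨x, hx⟩, 0),
    fun x hx => by simpa using hφ (0, ⟨x, hx⟩)⟩

theorem exists_isIdempotentElem_le_range_le_ker (hE : Module.Injective R E)
    {A C : Submodule R E} (h : Disjoint A C) :
    ∃ π : Module.End R E, IsIdempotentElem π ∧ A ≤ LinearMap.range π ∧ C ≤ LinearMap.ker π := by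
  obtain ⟨B, hCB, hB⟩ := exists_le_maximal_disjoint h
  obtain ⟨A', hAA', hA'⟩ := exists_le_maximal_disjoint hB.prop.symm
  -- `φ` extends the projection of `A' ⊕ B` onto `A'`; maximality of `B` and then of `A'` force
  -- `φ⁻¹ B = B` and `range φ = A'`, so `φ` is idempotent.
  obtain ⟨φ, hφA', hφB⟩ := hE.exists_eq_self_on_eq_zero_on hA'.prop.symm
  have hcomap : B.comap φ = B := by
    refine (hB.eq_of_ge (y := B.comap φ) (Submodule.disjoint_def.2 fun x hxA hxB => ?_)
      fun x hx => ?_)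
    · rw [Submodule.mem_comap, hφA' x (hAA' hxA)] at hxB
      exact Submodule.disjoint_def.1 hB.prop x hxA hxB
    · simp [hφB x hx]
  have hrange : LinearMap.range φ = A' := by
    refine (hA'.eq_of_ge (y := LinearMap.range φ) (Submodule.disjoint_def.2 ?_)
      fun x hx => ⟨x, hφA' x hx⟩)
    rintro _ hB ⟨y, rfl⟩
    exact hφB y (hcomap ▸ hB)
  refine ⟨φ, LinearMap.ext fun x => hφA' _ (hrange ▸ ⟨x, rfl⟩), hAA'.trans hrange.ge,
    hCB.trans fun x hx => hφB x hx⟩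

theorem isUnit_of_injective_of_isEssential_range (hE : Module.Injective R E)
    {g : Module.End R E} (hinj : Function.Injective g) (hg : IsEssential (LinearMap.range g)) :
    IsUnit g := by
  obtain ⟨ρ, hρ⟩ := hE.exists_leftInverseOn g (N := ⊤) (by simp [LinearMap.ker_eq_bot.2 hinj])
  have hρinj : LinearMap.ker ρ = ⊥ := by
    refine hg.eq_bot_of_disjoint (Submodule.disjoint_def.2 ?_)
    rintro _ ⟨x, rfl⟩ hx
    rw [← hρ x trivial, LinearMap.mem_ker.1 hx, map_zero]
  refine (Module.End.isUnit_iff g).2 ⟨hinj, fun y => ⟨ρ y, LinearMap.ker_eq_bot.1 hρinj ?_⟩⟩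
  exact hρ _ trivial

theorem isUnit_one_add_of_mem_essKerIdeal (hE : Module.Injective R E) {t : Module.End R E}
    (ht : t ∈ essKerIdeal R E) : IsUnit (1 + t) := by
  refine hE.isUnit_of_injective_of_isEssential_range ?_
    (IsEssential.mono ht fun x hx => ⟨x, ?_⟩)
  · refine LinearMap.ker_eq_bot.1 (IsEssential.eq_bot_of_disjoint ht ?_)
    refine Submodule.disjoint_def.2 fun x hx hx' => ?_
    simpa [LinearMap.mem_ker.1 hx] using hx'
  · simp [LinearMap.mem_ker.1 hx]

theorem essKerIdeal_le_jacobson (hE : Module.Injective R E) :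
    essKerIdeal R E ≤ Ring.jacobson (Module.End R E) :=
  Ring.le_jacobson_of_forall_isUnit_one_add fun _ ht => hE.isUnit_one_add_of_mem_essKerIdeal ht

theorem exists_mul_mul_sub_mem_essKerIdeal (hE : Module.Injective R E) (f : Module.End R E) :
    ∃ g : Module.End R E, f * g * f - f ∈ essKerIdeal R E := by
  obtain ⟨C, -, hC⟩ := exists_le_maximal_disjoint (disjoint_bot_right (a := LinearMap.ker f))
  obtain ⟨g, hg⟩ := hE.exists_leftInverseOn f hC.prop.symm
  refine ⟨g, IsEssential.mono (isEssential_sup_of_maximal_disjoint hC) (sup_le ?_ ?_)⟩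
  · intro x hx
    simp [LinearMap.mem_ker.1 hx]
  · intro x hx
    simp [hg x hx]

theorem exists_isIdempotentElem_sub_mem_essKerIdeal (hE : Module.Injective R E)
    {t : Module.End R E} (ht : t * t - t ∈ essKerIdeal R E) :
    ∃ p : Module.End R E, IsIdempotentElem p ∧ p - t ∈ essKerIdeal R E := by
  set W := LinearMap.ker (t * t - t)
  have htW : ∀ w ∈ W, t (t w) = t w := fun w hw => sub_eq_zero.1 hw
  have hW : ∀ w ∈ W, t w ∈ W := fun w hw => by
    simp [W, LinearMap.mem_ker, htW w hw]
  have hdisj : Disjoint (W.map t) (W ⊓ LinearMap.ker t) := by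
    refine Submodule.disjoint_def.2 ?_
    rintro _ ⟨w, hw, rfl⟩ ⟨-, htw⟩
    rw [← htW w hw]
    exact htw
  obtain ⟨p, hp, hWp, hWker⟩ := hE.exists_isIdempotentElem_le_range_le_ker hdisj
  refine ⟨p, hp, IsEssential.mono ht fun w hw => ?_⟩
  have h1 : p (w - t w) = 0 := hWker ⟨W.sub_mem hw (hW w hw), by simp [htW w hw]⟩
  have h2 : p (t w) = t w := (LinearMap.IsIdempotentElem.mem_range_iff hp).1 (hWp ⟨w, hw, rfl⟩)
  rw [map_sub, h2, sub_eq_zero] at h1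
  simp [h1]

end Module.Injective

def Submodule.IsAutomorphismInvariant {R E : Type*} [Ring R] [AddCommGroup E] [Module R E]
    (M : Submodule R E) : Prop :=
  ∀ φ : E ≃ₗ[R] E, ∀ x ∈ M, φ x ∈ M

namespace Submodule.IsAutomorphismInvariant

variable {R E : Type*} [Ring R] [AddCommGroup E] [Module R E] {M : Submodule R E}

theorem mapsTo_of_isUnit (hM : M.IsAutomorphismInvariant) {u : Module.End R E} (hu : IsUnit u) :
    ∀ x ∈ M, u x ∈ M :=
  hM (LinearEquiv.ofBijective u ((Module.End.isUnit_iff u).1 hu))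

theorem isUnit_restrict (hM : M.IsAutomorphismInvariant) {u : Module.End R E} (hu : IsUnit u) :
    IsUnit (u.restrict (hM.mapsTo_of_isUnit hu)) := by
  obtain ⟨u, rfl⟩ := hu
  refine isUnit_iff_exists.2
    ⟨(↑u⁻¹ : Module.End R E).restrict (hM.mapsTo_of_isUnit u⁻¹.isUnit), ?_, ?_⟩
  · exact LinearMap.ext fun m => Subtype.ext (LinearMap.congr_fun u.mul_inv m)
  · exact LinearMap.ext fun m => Subtype.ext (LinearMap.congr_fun u.inv_mul m)

theorem mapsTo_of_mul_self_eq_zero (hM : M.IsAutomorphismInvariant) {σ : Module.End R E}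
    (hσ : σ * σ = 0) : ∀ x ∈ M, σ x ∈ M := by
  have hunit : IsUnit (1 + σ) :=
    isUnit_iff_exists.2 ⟨1 - σ, by simp [mul_sub, add_mul, hσ], by simp [mul_add, sub_mul, hσ]⟩
  intro x hx
  simpa using M.sub_mem (hM.mapsTo_of_isUnit hunit x hx) hx

theorem essKerIdeal_le_jacobson (hM : M.IsAutomorphismInvariant) (hE : Module.Injective R E)
    (hess : IsEssential M) : essKerIdeal R M ≤ Ring.jacobson (Module.End R M) := by
  refine Ring.le_jacobson_of_forall_isUnit_one_add fun t ht => ?_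
  obtain ⟨T, hT⟩ := hE.out M.subtype M.injective_subtype (M.subtype ∘ₗ t)
  have hTt : ∀ m : M, T m = t m := hT
  have hT' : T ∈ essKerIdeal R E := by
    refine (IsEssential.map_subtype ht hess).mono ?_
    rintro _ ⟨m, hm, rfl⟩
    simpa [hTt] using hm
  have hU := hE.isUnit_one_add_of_mem_essKerIdeal hT'
  have hrestrict : (1 + T).restrict (hM.mapsTo_of_isUnit hU) = 1 + t :=
    LinearMap.ext fun m => Subtype.ext (by simp [hTt])
  exact hrestrict ▸ hM.isUnit_restrict hU

theorem eq_zero_of_mul_mul_eq_self (hM : M.IsAutomorphismInvariant) (hess : IsEssential M)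
    (hS : IsAbelianRing (Module.End R M ⧸ Ring.jacobson (Module.End R M)))
    {σ τ : Module.End R E} (hσ : σ * σ = 0) (hτ : τ * τ = 0) (h : τ * σ * τ = τ) : τ = 0 := by
  set a := σ.restrict (hM.mapsTo_of_mul_self_eq_zero hσ)
  set b := τ.restrict (hM.mapsTo_of_mul_self_eq_zero hτ)
  have hbb : b * b = 0 := LinearMap.ext fun m => Subtype.ext (LinearMap.congr_fun hτ m)
  have hbab : b * a * b = b := LinearMap.ext fun m => Subtype.ext (LinearMap.congr_fun h m)
  have hab : IsIdempotentElem (a * b) := by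
    rw [IsIdempotentElem, show a * b * (a * b) = a * (b * a * b) by noncomm_ring, hbab]
  -- `b (a b) - (a b) b = b`, and `a b` is central modulo the radical
  have hb : b ∈ Ring.jacobson (Module.End R M) := by
    let q := Ideal.Quotient.mk (Ring.jacobson (Module.End R M))
    have := hS (q (a * b)) (by rw [IsIdempotentElem, ← map_mul, hab.eq]) (q b)
    rwa [Commute, SemiconjBy, ← map_mul, ← map_mul, mul_assoc, hbb, mul_zero, ← mul_assoc, hbab,
      map_zero, eq_comm, Ideal.Quotient.eq_zero_iff_mem] at this
  have hab0 : a * b = 0 := hab.eq_zero_of_mem_jacobson (Ideal.mul_mem_left _ a hb)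
  have hστ : σ * τ = 0 := by
    have hidem : IsIdempotentElem (σ * τ) := by
      rw [IsIdempotentElem, show σ * τ * (σ * τ) = σ * (τ * σ * τ) by noncomm_ring, h]
    refine LinearMap.range_eq_bot.1 (hess.eq_bot_of_disjoint (Submodule.disjoint_def.2 ?_))
    intro x hxM hx
    rw [← (LinearMap.IsIdempotentElem.mem_range_iff hidem).1 hx]
    exact congr_arg Subtype.val (LinearMap.congr_fun hab0 ⟨x, hxM⟩)
  rw [← h, mul_assoc, hστ, mul_zero]

theorem one_sub_mul_mul_mem_essKerIdeal (hM : M.IsAutomorphismInvariant)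
    (hE : Module.Injective R E) (hess : IsEssential M)
    (hS : IsAbelianRing (Module.End R M ⧸ Ring.jacobson (Module.End R M)))
    {p : Module.End R E} (hp : IsIdempotentElem p) (t : Module.End R E) :
    (1 - p) * t * p ∈ essKerIdeal R E := by
  set σ := (1 - p) * t * p
  intro Z hZ hσZ
  obtain ⟨π, hπ, hZπ, hσπ⟩ :=
    hE.exists_isIdempotentElem_le_range_le_ker (disjoint_iff.2 (inf_comm Z _ ▸ hσZ))
  obtain ⟨ρ, hρ⟩ := hE.exists_leftInverseOn σ (N := LinearMap.range π) <|
    Submodule.disjoint_def.2 fun x hx hxσ => by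
      rw [← (LinearMap.IsIdempotentElem.mem_range_iff hπ).1 hx]
      exact hσπ hxσ
  have hπσ : π * σ = 0 := by
    have : σ * (1 - p) = 0 := by rw [mul_assoc, hp.mul_one_sub_self, mul_zero]
    have : π * (1 - p) = 0 := LinearMap.ext fun y => hσπ (LinearMap.congr_fun this y)
    rw [show π * σ = π * (1 - p) * t * p by simp only [σ, mul_assoc], this, zero_mul, zero_mul]
  -- `σ π` and `τ = π ρ (1 - π)` are square-zero with `τ (σ π) = π`; hence `τ = 0`, so `π = 0`,
  -- although the range of `π` contains `Z ≠ ⊥`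
  have hρσπ : ρ * σ * π = π := LinearMap.ext fun y => hρ _ ⟨y, rfl⟩
  have hσ' : (1 - π) * σ = σ := by rw [sub_mul, one_mul, hπσ, sub_zero]
  have hτσ : π * ρ * (1 - π) * (σ * π) = π := by
    rw [show π * ρ * (1 - π) * (σ * π) = π * (ρ * ((1 - π) * σ) * π) by simp only [mul_assoc],
      hσ', hρσπ, hπ.eq]
  have hτ : π * ρ * (1 - π) = 0 := by
    refine hM.eq_zero_of_mul_mul_eq_self hess hS (σ := σ * π) ?_ ?_ ?_
    · rw [show σ * π * (σ * π) = σ * (π * σ) * π by simp only [mul_assoc], hπσ, mul_zero,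
        zero_mul]
    · rw [show π * ρ * (1 - π) * (π * ρ * (1 - π)) = π * ρ * ((1 - π) * π) * (ρ * (1 - π)) by
        simp only [mul_assoc], hπ.one_sub_mul_self, mul_zero, zero_mul]
    · rw [hτσ, ← mul_assoc, ← mul_assoc, hπ.eq]
  rw [hτ, zero_mul] at hτσ
  exact hZ (eq_bot_iff.2 (hZπ.trans (by rw [← hτσ, LinearMap.range_zero])))

theorem isAbelianRing_quotient_essKerIdeal (hM : M.IsAutomorphismInvariant)
    (hE : Module.Injective R E) (hess : IsEssential M)
    (hS : IsAbelianRing (Module.End R M ⧸ Ring.jacobson (Module.End R M))) :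
    IsAbelianRing (Module.End R E ⧸ essKerIdeal R E) := by
  intro e he z
  obtain ⟨t, rfl⟩ := Ideal.Quotient.mk_surjective e
  obtain ⟨z, rfl⟩ := Ideal.Quotient.mk_surjective z
  rw [IsIdempotentElem, ← map_mul, Ideal.Quotient.eq] at he
  obtain ⟨p, hp, hpt⟩ := hE.exists_isIdempotentElem_sub_mem_essKerIdeal he
  have h₁ := hM.one_sub_mul_mul_mem_essKerIdeal hE hess hS hp z
  have h₂ := hM.one_sub_mul_mul_mem_essKerIdeal hE hess hS hp.one_sub z
  rw [sub_sub_cancel] at h₂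
  rw [← Ideal.Quotient.eq.2 hpt, Commute, SemiconjBy, ← map_mul, ← map_mul, Ideal.Quotient.eq]
  convert sub_mem h₂ h₁ using 1
  noncomm_ring

theorem exists_isUnit_mul_mul_sub_mem_essKerIdeal (hM : M.IsAutomorphismInvariant)
    (hE : Module.Injective R E) (hess : IsEssential M)
    (hS : IsAbelianRing (Module.End R M ⧸ Ring.jacobson (Module.End R M))) (f : Module.End R E) :
    ∃ u : Module.End R E, IsUnit u ∧ f * u * f - f ∈ essKerIdeal R E := by
  let q := Ideal.Quotient.mk (essKerIdeal R E)
  have : IsLocalHom q := Ideal.Quotient.isLocalHom_mk_of_le_jacobson hE.essKerIdeal_le_jacobson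
  obtain ⟨g, hg⟩ := hE.exists_mul_mul_sub_mem_essKerIdeal f
  obtain ⟨w, hw⟩ := (hM.isAbelianRing_quotient_essKerIdeal hE hess hS).exists_unit_mul_mul_eq
    (x := q f) (y := q g) (by simpa [← map_mul] using Ideal.Quotient.eq.2 hg)
  obtain ⟨u, hu⟩ := Ideal.Quotient.mk_surjective (w : Module.End R E ⧸ essKerIdeal R E)
  refine ⟨u, (isUnit_map_iff q u).1 (hu ▸ w.isUnit), Ideal.Quotient.eq.1 ?_⟩
  rw [map_mul, map_mul, hu, hw]

end Submodule.IsAutomorphismInvariant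

/-- An automorphism-invariant module M whose endomorphism ring has all idempotents
central modulo the Jacobson radical, with idempotents lifting, is a clean module:
every endomorphism is the sum of an idempotent endomorphism and an automorphism. -/
theorem stmt10 {R E : Type*} [Ring R] [AddCommGroup E] [Module R E]
    (hE : Module.Injective R E) (M : Submodule R E)
    (hess : IsEssential M)
    (hinv : ∀ φ : E ≃ₗ[R] E, ∀ x ∈ M, φ x ∈ M)
    (hcentral : ∀ e x : Module.End R ↥M,
      e * e - e ∈ Ideal.jacobson (⊥ : Ideal (Module.End R ↥M)) →
      e * x - x * e ∈ Ideal.jacobson (⊥ : Ideal (Module.End R ↥M)))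
    (hlift : ∀ e' : Module.End R ↥M,
      e' * e' - e' ∈ Ideal.jacobson (⊥ : Ideal (Module.End R ↥M)) →
      ∃ e : Module.End R ↥M, e * e = e ∧
        e - e' ∈ Ideal.jacobson (⊥ : Ideal (Module.End R ↥M))) :
    ∀ f : Module.End R ↥M, ∃ (e : Module.End R ↥M) (u : (Module.End R ↥M)ˣ),
      e * e = e ∧ f = e + u := by
  rw [Ideal.jacobson_bot] at hcentral hlift
  have hS := isAbelianRing_quotient_of_mul_sub_mul_mem hcentral
  have hM : M.IsAutomorphismInvariant := hinv
  intro f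
  obtain ⟨F, hF⟩ := hE.out M.subtype M.injective_subtype (M.subtype ∘ₗ f)
  have hFf : ∀ m : M, F m = f m := hF
  obtain ⟨U, hU, hFUF⟩ := hM.exists_isUnit_mul_mul_sub_mem_essKerIdeal hE hess hS F
  refine exists_idempotent_add_unit_of_mul_mul_sub_mem_jacobson hS hlift
    (u := (hM.isUnit_restrict hU).unit) ?_
  refine hM.essKerIdeal_le_jacobson hE hess
    ((IsEssential.comap hFUF M.subtype).mono fun m hm => Subtype.ext ?_)
  simpa [← hFf] using hm
end

section
/- Let M be a directly-finite automorphism-invariant module. Then the injective hull E(M) is directly finite, i.e., End(E(M)) satisfies: t∘s = 1 implies s∘t = 1. -/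
open LinearMap (ker range)

section Ring

variable {A : Type*} [Ring A]

theorem Subring.mem_of_mul_self_eq_zero {S : Subring A} (hS : ∀ u : Aˣ, (u : A) ∈ S) {n : A}
    (hn : n * n = 0) : n ∈ S := by
  have hu : IsUnit (1 + n) := IsNilpotent.isUnit_one_add ⟨2, by rw [pow_two, hn]⟩
  simpa using S.sub_mem (hS hu.unit) S.one_mem

/-- The four corners of `(a b + b a) g (a b + b a)` are products of square-zero elements. -/
theorem Subring.mul_mul_mem_of_mul_self_eq_zero {S : Subring A}
    (hS : ∀ n : A, n * n = 0 → n ∈ S) {a b : A} (ha : a * a = 0) (hb : b * b = 0) (g : A) :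
    (a * b + b * a) * g * (a * b + b * a) ∈ S := by
  have ha' : ∀ x, a * (a * x) = 0 := fun x => by rw [← mul_assoc, ha, zero_mul]
  have hb' : ∀ x, b * (b * x) = 0 := fun x => by rw [← mul_assoc, hb, zero_mul]
  have h₁ : b * g * a * b ∈ S := hS _ (by simp only [mul_assoc, hb', mul_zero])
  have h₂ : b * a * g * b ∈ S := hS _ (by simp only [mul_assoc, hb', mul_zero])
  have h₃ : a * b * g * b * a ∈ S := hS _ (by simp only [mul_assoc, ha', mul_zero])
  have h₄ : b * a * g * a * b ∈ S := hS _ (by simp only [mul_assoc, hb', mul_zero])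
  have hexp : (a * b + b * a) * g * (a * b + b * a) =
      a * (b * g * a * b) + b * a * g * b * a + a * b * g * b * a + b * a * g * a * b := by
    noncomm_ring
  rw [hexp]
  exact S.add_mem (S.add_mem (S.add_mem (S.mul_mem (hS a ha) h₁) (S.mul_mem h₂ (hS a ha))) h₃)
    h₄

theorem isIdempotentElem_mul_add_mul {a b : A} (ha : a * a = 0) (hb : b * b = 0)
    (haba : a * b * a = a) (hbab : b * a * b = b) : IsIdempotentElem (a * b + b * a) := by
  calc (a * b + b * a) * (a * b + b * a)
      = a * b * a * b + a * (b * b) * a + b * (a * a) * b + b * a * b * a := by noncomm_ring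
    _ = a * b + b * a := by rw [haba, hbab, ha, hb]; noncomm_ring

theorem exists_mul_self_eq_zero_of_mul_eq {e a τ : A} (he : IsIdempotentElem e)
    (hea : e * a = 0) (hae : a * e = a) (hτ : τ * a = e) :
    ∃ b : A, a * a = 0 ∧ b * b = 0 ∧ b * a = e ∧ a * b * a = a ∧ b * a * b = b := by
  have hba : e * τ * (1 - e) * a = e := by
    rw [mul_assoc, sub_mul, one_mul, hea, sub_zero, mul_assoc, hτ, he.eq]
  have hbe : e * τ * (1 - e) * e = 0 := by
    rw [mul_assoc, sub_mul, one_mul, he.eq, sub_self, mul_zero]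
  refine ⟨e * τ * (1 - e), ?_, ?_, hba, by rw [mul_assoc, hba, hae], ?_⟩
  · rw [← hae, mul_assoc, ← mul_assoc e, hea, zero_mul, mul_zero]
  · rw [← mul_assoc, ← mul_assoc, hbe, zero_mul, zero_mul]
  · rw [hba, ← mul_assoc, ← mul_assoc, he.eq]

end Ring

section Essential

variable {R E : Type*} [Ring R] [AddCommGroup E] [Module R E]

def IsEssentialIn (A B : Submodule R E) : Prop :=
  ∀ x ∈ B, x ≠ 0 → ∃ r : R, r • x ∈ A ∧ r • x ≠ 0

theorem isEssentialIn_refl (A : Submodule R E) : IsEssentialIn A A :=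
  fun x hx hx0 => ⟨1, by rwa [one_smul], by rwa [one_smul]⟩

theorem IsEssentialIn.trans {A B C : Submodule R E} (hAB : IsEssentialIn A B)
    (hBC : IsEssentialIn B C) : IsEssentialIn A C := by
  intro x hx hx0
  obtain ⟨r, hrB, hr0⟩ := hBC x hx hx0
  obtain ⟨r', hr'A, hr'0⟩ := hAB _ hrB hr0
  exact ⟨r' * r, by rwa [mul_smul], by rwa [mul_smul]⟩

theorem IsEssentialIn.disjoint {A B X : Submodule R E} (hAX : IsEssentialIn A X)
    (hAB : Disjoint A B) : Disjoint X B := by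
  rw [Submodule.disjoint_def] at hAB ⊢
  intro x hxX hxB
  by_contra hx0
  obtain ⟨r, hrA, hr0⟩ := hAX x hxX hx0
  exact hr0 (hAB _ hrA (B.smul_mem r hxB))

theorem IsEssentialIn.injective_of_forall_apply_eq {A : Submodule R E} (hA : IsEssentialIn A ⊤)
    {f : Module.End R E} (hf : ∀ x ∈ A, f x = x) : Function.Injective f := by
  rw [← LinearMap.ker_eq_bot, Submodule.eq_bot_iff]
  intro x hx
  by_contra hx0
  obtain ⟨r, hrA, hr0⟩ := hA x trivial hx0
  exact hr0 (by rw [← hf _ hrA, map_smul, LinearMap.mem_ker.1 hx, smul_zero])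

theorem IsEssentialIn.sup_range_add {A B : Submodule R E} {e₀ e₁ : Module.End R E}
    (hA : IsEssentialIn A (range e₀)) (hB : IsEssentialIn B (range e₁))
    (he : IsIdempotentElem (e₀ + e₁)) : IsEssentialIn (A ⊔ B) (range (e₀ + e₁)) := by
  have hdec : ∀ x ∈ range (e₀ + e₁), x = e₀ x + e₁ x := by
    rintro _ ⟨y, rfl⟩
    rw [← LinearMap.add_apply, ← Module.End.mul_apply, he.eq]
  intro x hx hx0
  by_cases h₀ : e₀ x = 0
  · have hx₁ : x = e₁ x := by simpa [h₀] using hdec x hx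
    obtain ⟨r, hrB, hr0⟩ := hB x ⟨x, hx₁.symm⟩ hx0
    exact ⟨r, Submodule.mem_sup_right hrB, hr0⟩
  obtain ⟨r, hrA, hr0⟩ := hA (e₀ x) ⟨x, rfl⟩ h₀
  have hy := hdec _ ((range (e₀ + e₁)).smul_mem r hx)
  rw [map_smul] at hy
  by_cases h₁ : e₁ (r • x) = 0
  · rw [h₁, add_zero] at hy
    exact ⟨r, hy ▸ Submodule.mem_sup_left hrA, hy ▸ hr0⟩
  obtain ⟨r', hr'B, hr'0⟩ := hB _ ⟨r • x, rfl⟩ h₁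
  refine ⟨r' * r, ?_, fun h => hr'0 ?_⟩
  · rw [mul_smul, hy, smul_add]
    exact Submodule.add_mem_sup (A.smul_mem r' hrA) hr'B
  · rw [← map_smul, ← mul_smul, h, map_zero]

theorem isEssentialIn_ker_of_mul_eq {W : Submodule R E} {p j : Module.End R E}
    (hW : IsEssentialIn W (range p)) (hWj : W ≤ ker j) (hjp : j * p = j) :
    IsEssentialIn (ker j) ⊤ := by
  intro x _ hx0
  by_cases hpx : p x = 0
  · refine ⟨1, ?_, by rwa [one_smul]⟩
    rw [one_smul, LinearMap.mem_ker, ← hjp, Module.End.mul_apply, hpx, map_zero]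
  obtain ⟨r, hrW, hr0⟩ := hW (p x) ⟨x, rfl⟩ hpx
  refine ⟨r, ?_, fun h => hr0 (by rw [← map_smul, h, map_zero])⟩
  rw [LinearMap.mem_ker, ← hjp, Module.End.mul_apply, map_smul]
  exact hWj hrW

theorem exists_maximal_isEssentialIn (A : Submodule R E) :
    ∃ X, A ≤ X ∧ Maximal (IsEssentialIn A) X := by
  refine zorn_le_nonempty₀ {N | IsEssentialIn A N} (fun c hcE hc N hN => ?_) A
    (isEssentialIn_refl A)
  refine ⟨sSup c, fun x hx hx0 => ?_, fun _ => le_sSup⟩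
  obtain ⟨N', hN'c, hxN'⟩ := (Submodule.mem_sSup_of_directed ⟨N, hN⟩ hc.directedOn).1 hx
  exact hcE hN'c x hxN' hx0

theorem exists_maximal_disjoint {X B : Submodule R E} (h : Disjoint X B) :
    ∃ C, B ≤ C ∧ Maximal (Disjoint X) C :=
  zorn_le_nonempty₀ {C | Disjoint X C}
    (fun c hcD hc _ _ => ⟨sSup c, hc.directedOn.disjoint_sSup_right.2 fun _ hC => hcD hC,
      fun _ => le_sSup⟩) B h

end Essential

section Shift

variable {R E : Type*} [Ring R] [AddCommGroup E] [Module R E] {s t : Module.End R E}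

def evenShifts (s : Module.End R E) (K : Submodule R E) : Submodule R E :=
  ⨆ n : ℕ, K.map (s ^ (2 * n))

theorem le_evenShifts (s : Module.End R E) (K : Submodule R E) : K ≤ evenShifts s K :=
  le_iSup_of_le 0 (by rw [mul_zero, pow_zero, Module.End.one_eq_id, Submodule.map_id])

theorem map_evenShifts (s : Module.End R E) (K : Submodule R E) :
    (evenShifts s K).map s = ⨆ n : ℕ, K.map (s ^ (2 * n + 1)) := by
  simp_rw [evenShifts, Submodule.map_iSup, ← Submodule.map_comp, ← Module.End.mul_eq_comp,
    ← pow_succ']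

theorem map_sup_map_evenShifts_le (s : Module.End R E) (K : Submodule R E) :
    (evenShifts s K ⊔ (evenShifts s K).map s).map s ≤ evenShifts s K ⊔ (evenShifts s K).map s := by
  rw [Submodule.map_sup]
  refine sup_le le_sup_right (le_sup_of_le_left ?_)
  rw [map_evenShifts, Submodule.map_iSup]
  refine iSup_le fun n => le_iSup_of_le (n + 1) ?_
  rw [← Submodule.map_comp, ← Module.End.mul_eq_comp, ← pow_succ', mul_add, mul_one]

/-- When `t * s = 1`, this reads off the `sʲ K`-component of
`E = K ⊕ s K ⊕ ⋯ ⊕ sʲ K ⊕ sʲ⁺¹ E` as an element of `K = ker t`. -/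
def shiftCoeff (s t : Module.End R E) (j : ℕ) : Module.End R E :=
  (1 - s * t) * t ^ j

theorem shiftCoeff_apply_pow_apply_of_ne (hts : t * s = 1) {k : E} (hk : k ∈ ker t) {j m : ℕ}
    (hjm : j ≠ m) : shiftCoeff s t j ((s ^ m) k) = 0 := by
  rw [shiftCoeff]
  rcases hjm.lt_or_gt with h | h
  · obtain ⟨d, rfl⟩ := Nat.exists_eq_add_of_lt h
    have h0 : (1 - s * t) * t ^ j * s ^ (j + d + 1) = 0 := by
      rw [show s ^ (j + d + 1) = s ^ j * (s * s ^ d) by rw [← pow_succ', ← pow_add]; rfl,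
        mul_assoc, ← mul_assoc (t ^ j), pow_mul_pow_eq_one j hts, one_mul, ← mul_assoc,
        sub_mul, one_mul, mul_assoc, hts, mul_one, sub_self, zero_mul]
    rw [← Module.End.mul_apply, h0, LinearMap.zero_apply]
  · obtain ⟨d, rfl⟩ := Nat.exists_eq_add_of_lt h
    have h0 : t ^ (m + d + 1) * s ^ m = t ^ d * t := by
      have hpow : t ^ (m + d + 1) = t ^ d * t * t ^ m := by
        rw [← pow_succ, ← pow_add]
        congr 1
        omega
      rw [hpow, mul_assoc, pow_mul_pow_eq_one m hts, mul_one]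
    rw [Module.End.mul_apply, ← Module.End.mul_apply (t ^ _), h0, Module.End.mul_apply,
      LinearMap.mem_ker.1 hk, map_zero, map_zero]

theorem iSup_map_pow_le_ker_shiftCoeff (hts : t * s = 1) {f : ℕ → ℕ} {j : ℕ}
    (hf : ∀ n, f n ≠ j) : ⨆ n, (ker t).map (s ^ f n) ≤ ker (shiftCoeff s t j) :=
  iSup_le fun n => by
    rintro _ ⟨k, hk, rfl⟩
    exact shiftCoeff_apply_pow_apply_of_ne hts hk (hf n).symm

theorem iSup_map_pow_le_iSup_ker_pow (hts : t * s = 1) (f : ℕ → ℕ) :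
    ⨆ n, (ker t).map (s ^ f n) ≤ ⨆ N, ker (t ^ N) :=
  iSup_le fun n => by
    rintro _ ⟨k, hk, rfl⟩
    refine Submodule.mem_iSup_of_mem (f n + 1) ?_
    rw [LinearMap.mem_ker, pow_succ', Module.End.mul_apply, ← Module.End.mul_apply (t ^ f n),
      pow_mul_pow_eq_one _ hts, Module.End.one_apply]
    exact hk

theorem eq_zero_of_forall_shiftCoeff_eq_zero {N : ℕ} {x : E} (hN : (t ^ N) x = 0)
    (hx : ∀ j, shiftCoeff s t j x = 0) : x = 0 := by
  induction N generalizing x with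
  | zero => simpa using hN
  | succ N ih =>
    have hst : x = s (t x) := by simpa [shiftCoeff, sub_eq_zero] using hx 0
    refine hst.trans ((congrArg s (ih (x := t x) ?_ fun j => ?_)).trans (map_zero s))
    · rwa [← Module.End.mul_apply, ← pow_succ]
    · simpa only [shiftCoeff, pow_succ, ← mul_assoc, Module.End.mul_apply] using hx (j + 1)

theorem disjoint_evenShifts_map (hts : t * s = 1) :
    Disjoint (evenShifts s (ker t)) ((evenShifts s (ker t)).map s) := by
  rw [Submodule.disjoint_def, map_evenShifts]
  intro x hev hod
  have hmono : Monotone fun N => ker (t ^ N) := monotone_nat_of_le_succ fun N => by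
    rw [pow_succ', Module.End.mul_eq_comp]
    exact LinearMap.ker_le_ker_comp _ _
  obtain ⟨N, hN⟩ := (Submodule.mem_iSup_of_directed _ hmono.directed_le).1
    (iSup_map_pow_le_iSup_ker_pow hts _ hev)
  refine eq_zero_of_forall_shiftCoeff_eq_zero (s := s) hN fun j => ?_
  obtain ⟨i, rfl | rfl⟩ := Nat.even_or_odd' j
  · exact iSup_map_pow_le_ker_shiftCoeff hts (f := fun n => 2 * n + 1) (j := 2 * i) (by omega) hod
  · exact iSup_map_pow_le_ker_shiftCoeff hts (f := fun n => 2 * n) (j := 2 * i + 1) (by omega) hev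

end Shift

namespace Submodule

variable {R E : Type*} [Ring R] [AddCommGroup E] [Module R E] (M : Submodule R E)

def stabilizer : Subring (Module.End R E) where
  carrier := {f | ∀ x ∈ M, f x ∈ M}
  mul_mem' hf hg x hx := hf _ (hg x hx)
  one_mem' _ hx := hx
  add_mem' hf hg x hx := M.add_mem (hf x hx) (hg x hx)
  zero_mem' _ _ := M.zero_mem
  neg_mem' hf x hx := M.neg_mem (hf x hx)

variable {M}

theorem units_mem_stabilizer (hinv : ∀ φ : E ≃ₗ[R] E, ∀ x ∈ M, φ x ∈ M)
    (u : (Module.End R E)ˣ) : (u : Module.End R E) ∈ M.stabilizer :=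
  hinv (LinearMap.GeneralLinearGroup.toLinearEquiv u)

theorem apply_apply_eq_of_mul_eq_one (hdf : ∀ x y : Module.End R M, x * y = 1 → y * x = 1)
    {x y : Module.End R E} (hx : x ∈ M.stabilizer) (hy : y ∈ M.stabilizer) (hxy : x * y = 1)
    {m : E} (hm : m ∈ M) : y (x m) = m := by
  have h := hdf (x.restrict hx) (y.restrict hy)
    (LinearMap.ext fun m => Subtype.ext (LinearMap.congr_fun hxy m))
  exact congrArg Subtype.val (LinearMap.congr_fun h ⟨m, hm⟩)

end Submodule

namespace Module.Injective

variable {R E : Type*} [Ring R] [AddCommGroup E] [Module R E] (hE : Module.Injective R E)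
include hE

theorem exists_projection_of_disjoint {X C : Submodule R E} (h : Disjoint X C) :
    ∃ H : Module.End R E, (∀ x ∈ X, H x = x) ∧ ∀ c ∈ C, H c = 0 := by
  have hinj : Function.Injective (X.subtype.coprod C.subtype) := by
    rw [← LinearMap.ker_eq_bot, LinearMap.ker_coprod_of_disjoint_range _ _ (by simpa using h)]
    simp
  obtain ⟨H, hH⟩ := hE.out _ hinj (X.subtype.comp (LinearMap.fst R X C))
  exact ⟨H, fun x hx => by simpa using hH (⟨x, hx⟩, 0),
    fun c hc => by simpa using hH (0, ⟨c, hc⟩)⟩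

theorem exists_isIdempotentElem_isEssentialIn {A B : Submodule R E} (hAB : Disjoint A B) :
    ∃ p : Module.End R E,
      IsIdempotentElem p ∧ A ≤ range p ∧ IsEssentialIn A (range p) ∧ B ≤ ker p := by
  obtain ⟨X, hAX, hX⟩ := exists_maximal_isEssentialIn A
  obtain ⟨C, hBC, hC⟩ := exists_maximal_disjoint (hX.prop.disjoint hAB)
  obtain ⟨H, hHX, hHC⟩ := hE.exists_projection_of_disjoint hC.prop
  have hXH : X ≤ range H := fun x hx => ⟨x, hHX x hx⟩
  -- by maximality of `C`, some `r • x` with `H x ≠ 0` lies in `X ⊕ C` with nonzero `X`-part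
  have hess : IsEssentialIn X (range H) := by
    rintro _ ⟨x, rfl⟩ hx0
    have hxC : x ∉ C := fun hxC => hx0 (hHC x hxC)
    obtain ⟨u, huX, hu, hu0⟩ : ∃ u ∈ X, u ∈ C ⊔ R ∙ x ∧ u ≠ 0 := by
      by_contra! hd
      exact hxC (hC.2 (Submodule.disjoint_def.2 hd) le_sup_left
        (Submodule.mem_sup_right (Submodule.mem_span_singleton_self x)))
    obtain ⟨c, hc, _, hy, rfl⟩ := Submodule.mem_sup.1 hu
    obtain ⟨r, rfl⟩ := Submodule.mem_span_singleton.1 hy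
    have hru : r • H x = c + r • x := by
      rw [← hHX _ huX, map_add, hHC c hc, zero_add, map_smul]
    exact ⟨r, hru ▸ huX, hru ▸ hu0⟩
  have hrange : range H = X := le_antisymm (hX.2 (hX.prop.trans hess) hXH) hXH
  refine ⟨H, LinearMap.ext fun x => hHX _ (hrange ▸ ⟨x, rfl⟩), hrange ▸ hAX, hrange ▸ hX.prop,
    fun b hb => hHC b (hBC hb)⟩

theorem exists_mul_mul_eq_of_injective {f e : Module.End R E}
    (hf : Function.Injective (f.comp (range e).subtype)) :
    ∃ τ : Module.End R E, τ * f * e = e := by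
  obtain ⟨τ, hτ⟩ := hE.out _ hf (range e).subtype
  exact ⟨τ, LinearMap.ext fun x => hτ ⟨e x, x, rfl⟩⟩

theorem isUnit_one_add {j : Module.End R E} (hj : IsEssentialIn (ker j) ⊤) : IsUnit (1 + j) := by
  have hfix : ∀ x ∈ ker j, (1 + j) x = x := fun x hx => by simp [LinearMap.mem_ker.1 hx]
  obtain ⟨G, hG⟩ := hE.out _ (hj.injective_of_forall_apply_eq hfix) LinearMap.id
  have hGη : G * (1 + j) = 1 := LinearMap.ext hG
  have hηG : IsIdempotentElem ((1 + j) * G) := by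
    rw [IsIdempotentElem, mul_assoc, ← mul_assoc G, hGη, one_mul]
  have hinj := hj.injective_of_forall_apply_eq (f := (1 + j) * G) fun x hx =>
    calc ((1 + j) * G) x = (1 + j) (G ((1 + j) x)) := by rw [hfix x hx]; rfl
      _ = x := by rw [hG, LinearMap.id_apply, hfix x hx]
  exact ⟨⟨1 + j, G, LinearMap.ext fun x => hinj (LinearMap.congr_fun hηG.eq x), hGη⟩, rfl⟩

theorem exists_square_zero_extension {s : Module.End R E} (hs : Function.Injective s)
    {W : Submodule R E} {e : Module.End R E} (he : IsIdempotentElem e) (hWe : W ≤ range e)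
    (hWess : IsEssentialIn W (range e)) (hsWe : W.map s ≤ ker e) :
    ∃ a b : Module.End R E, a * a = 0 ∧ b * b = 0 ∧ b * a = e ∧ a * b * a = a ∧ b * a * b = b ∧
      ∀ u ∈ W, a u = s u := by
  set a := (1 - e) * s * e with ha_def
  have hea : e * a = 0 := by
    rw [ha_def, ← mul_assoc, ← mul_assoc, mul_sub, mul_one, he.eq, sub_self, zero_mul, zero_mul]
  have hae : a * e = a := by rw [ha_def, mul_assoc, he.eq]
  have haW : ∀ u ∈ W, a u = s u := by
    intro u hu
    obtain ⟨v, hv⟩ := hWe hu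
    have hsu : e (s u) = 0 := hsWe (Submodule.mem_map_of_mem hu)
    have heu : e u = u := by rw [← hv, ← Module.End.mul_apply, he.eq]
    simp [ha_def, heu, hsu]
  -- `a` agrees with the injective `s` on `W`, which is essential in `range e`
  have ha_inj : Function.Injective (a.comp (range e).subtype) := by
    rw [← LinearMap.ker_eq_bot, Submodule.eq_bot_iff]
    rintro ⟨x, hx⟩ hax
    by_contra hx0
    obtain ⟨r, hrW, hr0⟩ := hWess x hx fun h => hx0 (Subtype.ext h)
    refine hr0 (hs ?_)
    rw [← haW _ hrW, map_smul, map_zero]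
    exact (smul_eq_zero_of_right r (LinearMap.mem_ker.1 hax) :)
  obtain ⟨τ, hτ⟩ := hE.exists_mul_mul_eq_of_injective ha_inj
  obtain ⟨b, ha2, hb2, hba, haba, hbab⟩ :=
    exists_mul_self_eq_zero_of_mul_eq he hea hae (by rwa [mul_assoc, hae] at hτ)
  exact ⟨a, b, ha2, hb2, hba, haba, hbab, haW⟩

theorem exists_square_zero_pair {s : Module.End R E} (hs : Function.Injective s)
    {W : Submodule R E} (hW : Disjoint W (W.map s)) :
    ∃ a b : Module.End R E, a * a = 0 ∧ b * b = 0 ∧ IsIdempotentElem (b * a + a * b) ∧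
      (∀ w ∈ W ⊔ W.map s, (b * a + a * b) w = w) ∧
      IsEssentialIn (W ⊔ W.map s) (range (b * a + a * b)) := by
  obtain ⟨e, he, hWe, hWess, hsWe⟩ := hE.exists_isIdempotentElem_isEssentialIn hW
  obtain ⟨a, b, ha2, hb2, hba, haba, hbab, haW⟩ :=
    hE.exists_square_zero_extension hs he hWe hWess hsWe
  have hp := isIdempotentElem_mul_add_mul hb2 ha2 hbab haba
  have hbe : b * e = 0 := by rw [← hba, ← mul_assoc, hb2, zero_mul]
  have heb : e * b = b := by rw [← hba, hbab]
  have hWa : IsEssentialIn (W.map s) (range (a * b)) := by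
    rintro _ ⟨z, rfl⟩ hy0
    have hbz0 : b z ≠ 0 := fun h => hy0 (by rw [Module.End.mul_apply, h, map_zero])
    obtain ⟨r, hrW, hr0⟩ := hWess _ ⟨b z, LinearMap.congr_fun heb z⟩ hbz0
    have hr : r • (a * b) z = s (r • b z) := by
      rw [Module.End.mul_apply, ← map_smul, haW _ hrW]
    exact ⟨r, hr ▸ Submodule.mem_map_of_mem hrW,
      hr ▸ fun h => hr0 (hs (h.trans (map_zero s).symm))⟩
  refine ⟨a, b, ha2, hb2, hp, ?_, (hba ▸ hWess).sup_range_add hWa hp⟩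
  have hpe : (b * a + a * b) * (b * a) = b * a := by
    rw [add_mul, hba, he.eq, mul_assoc, hbe, mul_zero, add_zero]
  have hpa : (b * a + a * b) * a = a := by
    rw [add_mul, mul_assoc, ha2, mul_zero, zero_add, haba]
  rintro _ hw
  obtain ⟨u, hu, _, ⟨v, hv, rfl⟩, rfl⟩ := Submodule.mem_sup.1 hw
  obtain ⟨u', rfl⟩ := hWe hu
  rw [map_add, ← haW v hv, ← hba, ← Module.End.mul_apply, ← Module.End.mul_apply, hpe, hpa]

theorem disjoint_ker_of_mul_eq_one
    {M : Submodule R E} (hinv : ∀ φ : E ≃ₗ[R] E, ∀ x ∈ M, φ x ∈ M)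
    (hdf : ∀ x y : Module.End R M, x * y = 1 → y * x = 1)
    {s t : Module.End R E} (hts : t * s = 1) : Disjoint M (ker t) := by
  have hts' : ∀ x, t (s x) = x := fun x => LinearMap.congr_fun hts x
  set W := evenShifts s (ker t)
  obtain ⟨a, b, ha, hb, hp, hpW, hWp⟩ := hE.exists_square_zero_pair
    (Function.LeftInverse.injective hts') (disjoint_evenShifts_map hts)
  set p := b * a + a * b
  have hS : ∀ n : Module.End R E, n * n = 0 → n ∈ M.stabilizer := fun _ =>
    Subring.mem_of_mul_self_eq_zero (Submodule.units_mem_stabilizer hinv)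
  have hcorner : ∀ g, p * g * p ∈ M.stabilizer :=
    Subring.mul_mul_mem_of_mul_self_eq_zero hS hb ha
  set y := p * s * p + (1 - p)
  set z := p * t * p + (1 - p)
  have hzy : z * y = 1 + (p * t * p * s * p - p) := by
    have hpp : ∀ x, p * (p * x) = p * x := fun x => by rw [← mul_assoc, hp.eq]
    simp only [y, z, mul_add, add_mul, mul_sub, sub_mul, mul_one, one_mul, mul_assoc, hp.eq, hpp]
    abel
  have hunit : IsUnit (z * y) := by
    rw [hzy]
    refine hE.isUnit_one_add (isEssentialIn_ker_of_mul_eq hWp (fun w hw => ?_) ?_)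
    · have hsw := map_sup_map_evenShifts_le s _ (Submodule.mem_map_of_mem hw)
      simp [LinearMap.mem_ker, hpW w hw, hpW _ hsw, hts']
    · rw [sub_mul, mul_assoc _ p p, hp.eq]
  set x := ↑hunit.unit⁻¹ * z
  have hxy : x * y = 1 := by rw [mul_assoc, hunit.val_inv_mul]
  have hpS : 1 - p ∈ M.stabilizer := by
    refine sub_mem (one_mem _) ?_
    simpa [hp.eq] using hcorner 1
  have hxS : x ∈ M.stabilizer := mul_mem (Submodule.units_mem_stabilizer hinv _)
    (add_mem (hcorner t) hpS)
  have hyS : y ∈ M.stabilizer := add_mem (hcorner s) hpS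
  rw [Submodule.disjoint_def]
  intro m hmM hmK
  have hpm : p m = m := hpW m (Submodule.mem_sup_left (le_evenShifts s _ hmK))
  have hxm : x m = 0 := by simp [x, z, hpm, LinearMap.mem_ker.1 hmK]
  rw [← Submodule.apply_apply_eq_of_mul_eq_one hdf hxS hyS hxy hmM, hxm, map_zero]

end Module.Injective

/-- If a directly-finite module M is automorphism-invariant, then its injective
hull E is directly finite. -/
theorem stmt12 {R E : Type*} [Ring R] [AddCommGroup E] [Module R E]
    (hE : Module.Injective R E) (M : Submodule R E)
    (hess : IsEssential M)
    (hinv : ∀ φ : E ≃ₗ[R] E, ∀ x ∈ M, φ x ∈ M)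
    (hdf : ∀ x y : Module.End R ↥M, x * y = 1 → y * x = 1) :
    ∀ s t : Module.End R E, t * s = 1 → s * t = 1 := by
  intro s t hts
  have hker : ker t = ⊥ := by
    by_contra hK
    exact hess _ hK (hE.disjoint_ker_of_mul_eq_one hinv hdf hts).eq_bot
  ext x
  refine LinearMap.ker_eq_bot.1 hker ?_
  simp only [Module.End.mul_apply, Module.End.one_apply, ← Module.End.mul_apply t s, hts]
end
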